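/- arXiv:1908.04125 — 2 statements merged into one kernel-verified Lean document; each statement's English description precedes it below -/
import Mathlib

section
/- Let G be a finite group of order p_1^{β_1} ⋯ p_k^{β_k} (distinct primes p_j) and let [A_1, ..., A_s] be a logarithmic signature for G with all |A_i| ≥ 2. Then Σ_{i=1}^s |A_i| ≥ Σ_{j=1}^k β_j p_j. -/
/-!
Since the product map `A_1 × ⋯ × A_s → G` is a bijection, `|G| = ∏ |A_i|`. The sum of prime
factors counted with multiplicity, `sopfr`, turns this product into the sum `∑ sopfr |A_i|`, and
`sopfr m ≤ m` because `m` is the product of its prime factors, and a product of integers `≥ 2`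
dominates their sum.
-/

def IsLogSignature {G : Type*} [Monoid G] {s : ℕ} (A : Fin s → Finset G) : Prop :=
  ∀ g : G, ∃! t : Fin s → G, (∀ i, t i ∈ A i) ∧ (List.ofFn t).prod = g

theorem IsLogSignature.card_eq_prod {G : Type*} [Monoid G] [Fintype G] {s : ℕ}
    {A : Fin s → Finset G} (hA : IsLogSignature A) :
    Fintype.card G = ∏ i, (A i).card := by
  let f : (∀ i, A i) → G := fun t => (List.ofFn fun i => (t i : G)).prod
  have hf : f.Bijective := by
    refine (Function.bijective_iff_existsUnique f).2 fun g => ?_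
    obtain ⟨t, ⟨ht, rfl⟩, huniq⟩ := hA g
    refine ⟨fun i => ⟨t i, ht i⟩, rfl, fun u hu => funext fun i => Subtype.ext ?_⟩
    exact congrFun (huniq (fun i => u i) ⟨fun i => (u i).2, hu⟩) i
  simp [← Fintype.card_of_bijective hf]

theorem List.sum_le_prod_of_two_le {l : List ℕ} (hl : ∀ a ∈ l, 2 ≤ a) : l.sum ≤ l.prod := by
  induction l with
  | nil => simp
  | cons a l ih =>
    have ha : 2 ≤ a := hl a List.mem_cons_self
    have hl' : ∀ b ∈ l, 2 ≤ b := fun b hb => hl b (List.mem_cons_of_mem a hb)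
    rcases l with _ | ⟨b, l⟩
    · simp
    · have hprod : 2 ≤ (b :: l).prod := calc
        2 ≤ b := hl' b List.mem_cons_self
        _ ≤ (b :: l).prod := by
          rw [List.prod_cons]
          exact Nat.le_mul_of_pos_right b
            (List.prod_pos fun c hc => by have := hl' c (List.mem_cons_of_mem b hc); omega)
      rw [List.sum_cons, List.prod_cons]
      nlinarith [ih hl']

def Nat.sopfr (n : ℕ) : ℕ := n.factorization.sum fun p β => β * p

theorem Nat.sopfr_eq_sum_primeFactorsList (n : ℕ) : n.sopfr = n.primeFactorsList.sum := by
  rw [Finset.sum_list_count, Nat.sopfr, Finsupp.sum, Nat.support_factorization,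
    Nat.toFinset_factors]
  simp [Nat.primeFactorsList_count_eq]

theorem Nat.sopfr_le_self {n : ℕ} (hn : n ≠ 0) : n.sopfr ≤ n := calc
  n.sopfr = n.primeFactorsList.sum := n.sopfr_eq_sum_primeFactorsList
  _ ≤ n.primeFactorsList.prod :=
    List.sum_le_prod_of_two_le fun _ hp => (Nat.prime_of_mem_primeFactorsList hp).two_le
  _ = n := Nat.prod_primeFactorsList hn

theorem Nat.sopfr_prod {ι : Type*} {S : Finset ι} {f : ι → ℕ} (hf : ∀ i ∈ S, f i ≠ 0) :
    (∏ i ∈ S, f i).sopfr = ∑ i ∈ S, (f i).sopfr := by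
  rw [Nat.sopfr, Nat.factorization_prod hf,
    ← Finsupp.sum_finsetSum_index (fun _ => zero_mul _) (fun _ _ _ => add_mul _ _ _)]
  rfl

/-- González Vasco–Steinwandt lower bound: a nontrivial logarithmic signature
for a finite group `G` of order `∏ p_j ^ β_j` has length at least `∑ β_j p_j`. -/
theorem logSig_length_lower_bound
    (G : Type*) [Group G] [Fintype G] (s : ℕ) (A : Fin s → Finset G)
    (hLS : ∀ g : G, ∃! t : Fin s → G, (∀ i, t i ∈ A i) ∧ (List.ofFn t).prod = g)
    (h2 : ∀ i, 2 ≤ (A i).card) :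
    ((Fintype.card G).factorization.sum fun p β => β * p) ≤ ∑ i, (A i).card := by
  have hA : ∀ i ∈ Finset.univ, (A i).card ≠ 0 := fun i _ => by have := h2 i; omega
  calc (Fintype.card G).sopfr
      = ∑ i, (A i).card.sopfr := by
        rw [IsLogSignature.card_eq_prod hLS, Nat.sopfr_prod hA]
    _ ≤ ∑ i, (A i).card := Finset.sum_le_sum fun i hi => Nat.sopfr_le_self (hA i hi)
end

section
/- Let G be a finite group with subgroups H and K such that H ∩ gKg^{-1} = 1 for all g ∈ G, and suppose G = HgK for a single double coset (n = 1). If H and K each admit a minimal logarithmic signature, then G admits a minimal logarithmic signature; in particular if G = HK with H ∩ K = 1 and |G| = |H||K|, then concatenating an MLS of H with an MLS of K gives an MLS of G. -/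
/-- `A` is a logarithmic signature for the group `G`. -/
def IsLogSig {G : Type*} [Group G] {s : ℕ} (A : Fin s → Finset G) : Prop :=
  ∀ g : G, ∃! t : Fin s → G, (∀ i, t i ∈ A i) ∧ (List.ofFn t).prod = g

/-- The minimal possible length `∑ β_j p_j` for a logarithmic signature of a
group of order `m = ∏ p_j ^ β_j`. -/
def minLSLength (m : ℕ) : ℕ := m.factorization.sum fun p β => β * p

/-- `G` has a minimal logarithmic signature. -/
def HasMLS (G : Type*) [Group G] [Finite G] : Prop :=
  ∃ s : ℕ, ∃ A : Fin s → Finset G,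
    IsLogSig A ∧ ∑ i, (A i).card = minLSLength (Nat.card G)

/-!
With `g = 1` the hypothesis on conjugates says `H ∩ K = 1`, and writing `1 = h₀ g₀ k₀` turns
`G = H g₀ K` into `G = H K`; so `H` and `K` are complements and every element of `G` is
uniquely `h k`. Hence the concatenation of logarithmic signatures of `H` and `K` is one of `G`,
of length `minLSLength |H| + minLSLength |K| = minLSLength (|H| |K|) = minLSLength |G|`,
since `minLSLength` is additive over the factorization of a product.
-/

open Function
open scoped Pointwise

lemma minLSLength_mul {m n : ℕ} (hm : m ≠ 0) (hn : n ≠ 0) :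
    minLSLength (m * n) = minLSLength m + minLSLength n := by
  unfold minLSLength
  rw [Nat.factorization_mul hm hn]
  exact Finsupp.sum_add_index' (fun p => zero_mul p) (fun p b₁ b₂ => add_mul b₁ b₂ p)

lemma Fin.sum_card_append_image {α β γ : Type*} [DecidableEq γ] {m n : ℕ} {φ : α → γ}
    {ψ : β → γ} (hφ : Injective φ) (hψ : Injective ψ) (A : Fin m → Finset α)
    (B : Fin n → Finset β) :
    ∑ i, (Fin.append (fun i => (A i).image φ) (fun j => (B j).image ψ) i).card =
      ∑ i, (A i).card + ∑ j, (B j).card := by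
  simp only [Fin.sum_univ_add, Fin.append_left, Fin.append_right,
    Finset.card_image_of_injective _ hφ, Finset.card_image_of_injective _ hψ]

lemma Subgroup.coe_mul_coe_eq_univ_of_forall_eq_mul_mul {G : Type*} [Group G]
    {H K : Subgroup G} {g₀ : G} (hcoset : ∀ x : G, ∃ h ∈ H, ∃ k ∈ K, x = h * g₀ * k) :
    (H : Set G) * (K : Set G) = Set.univ := by
  obtain ⟨h₀, hh₀, k₀, hk₀, h_one⟩ := hcoset 1
  refine Set.eq_univ_of_forall fun x => ?_
  obtain ⟨h, hh, k, hk, rfl⟩ := hcoset x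
  refine ⟨h * h₀⁻¹, H.mul_mem hh (H.inv_mem hh₀), k₀⁻¹ * k, K.mul_mem (K.inv_mem hk₀) hk, ?_⟩
  calc h * h₀⁻¹ * (k₀⁻¹ * k) = h * (h₀⁻¹ * 1 * k₀⁻¹) * k := by group
    _ = h * g₀ * k := by rw [h_one]; group

section LogSig

variable {G H K : Type*} [Group G] [Group H] [Group K]

lemma List.prod_ofFn_map {s : ℕ} (φ : H →* G) (u : Fin s → H) :
    (List.ofFn fun i => φ (u i)).prod = φ (List.ofFn u).prod := by
  rw [map_list_prod, List.map_ofFn]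
  rfl

lemma List.prod_ofFn_fin_append {m n : ℕ} (u : Fin m → G) (v : Fin n → G) :
    (List.ofFn (Fin.append u v)).prod = (List.ofFn u).prod * (List.ofFn v).prod := by
  rw [List.ofFn_fin_append, List.prod_append]

theorem IsLogSig.append_image [DecidableEq G] (φ : H →* G) (ψ : K →* G)
    (hφψ : Bijective fun p : H × K => φ p.1 * ψ p.2) {m n : ℕ}
    {A : Fin m → Finset H} {B : Fin n → Finset K} (hA : IsLogSig A) (hB : IsLogSig B) :
    IsLogSig (Fin.append (fun i => (A i).image φ) (fun j => (B j).image ψ)) := by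
  intro g
  obtain ⟨⟨h, k⟩, rfl⟩ := hφψ.2 g
  obtain ⟨u, ⟨hu, rfl⟩, hu_uniq⟩ := hA h
  obtain ⟨v, ⟨hv, rfl⟩, hv_uniq⟩ := hB k
  refine ⟨Fin.append (fun i => φ (u i)) (fun j => ψ (v j)), ⟨?_, ?_⟩, ?_⟩
  · refine (Fin.forall_fin_add _).2 ⟨fun i => ?_, fun j => ?_⟩
    · simpa only [Fin.append_left] using Finset.mem_image_of_mem φ (hu i)
    · simpa only [Fin.append_right] using Finset.mem_image_of_mem ψ (hv j)
  · rw [List.prod_ofFn_fin_append, List.prod_ofFn_map, List.prod_ofFn_map]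
  · rintro t ⟨ht, ht_prod⟩
    rw [← Fin.append_castAdd_natAdd (f := t)] at ht ht_prod ⊢
    obtain ⟨htl, htr⟩ := (Fin.forall_fin_add _).1 ht
    simp only [Fin.append_left, Fin.append_right, Finset.mem_image] at htl htr
    choose u' hu' hu'_eq using htl
    choose v' hv' hv'_eq using htr
    simp only [← hu'_eq, ← hv'_eq, List.prod_ofFn_fin_append, List.prod_ofFn_map] at ht_prod ⊢
    have hprod : ((List.ofFn u').prod, (List.ofFn v').prod) =
        ((List.ofFn u).prod, (List.ofFn v).prod) := hφψ.1 ht_prod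
    rw [hu_uniq u' ⟨hu', congrArg Prod.fst hprod⟩, hv_uniq v' ⟨hv', congrArg Prod.snd hprod⟩]

end LogSig

/-- The `n = 1` case of the Lempken–van Trung construction: if
`H ∩ gKg⁻¹ = 1` for all `g ∈ G`, `G` is a single double coset `H g₀ K`, and
`H` and `K` have minimal logarithmic signatures, then so does `G`. -/
theorem hasMLS_of_single_double_coset
    (G : Type*) [Group G] [Finite G] (H K : Subgroup G)
    (hdisj : ∀ g : G, ∀ x : G, x ∈ H → (∃ k ∈ K, x = g * k * g⁻¹) → x = 1)
    (g₀ : G) (hcoset : ∀ x : G, ∃ h ∈ H, ∃ k ∈ K, x = h * g₀ * k)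
    (hH : HasMLS H) (hK : HasMLS K) : HasMLS G := by
  classical
  have hdisjoint : Disjoint H K :=
    Subgroup.disjoint_def.2 fun hxH hxK => hdisj 1 _ hxH ⟨_, hxK, by group⟩
  have hcompl : H.IsComplement' K := Subgroup.isComplement'_of_disjoint_and_mul_eq_univ
    hdisjoint (Subgroup.coe_mul_coe_eq_univ_of_forall_eq_mul_mul hcoset)
  obtain ⟨m, A, hA, hA_card⟩ := hH
  obtain ⟨n, B, hB, hB_card⟩ := hK
  refine ⟨m + n, _, hA.append_image H.subtype K.subtype hcompl hB, ?_⟩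
  rw [Fin.sum_card_append_image H.subtype_injective K.subtype_injective, hA_card, hB_card,
    ← minLSLength_mul Nat.card_pos.ne' Nat.card_pos.ne', hcompl.card_mul_card]
end
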